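/- arXiv:cond-mat/0411699 — 3 statements merged into one kernel-verified Lean document; each statement's English description precedes it below -/
import Mathlib

section
/- For integers 0 ≤ k ≤ n and p ∈ [0,1], the binomial tail probability ∑_{i=0}^k C(n,i) p^i (1-p)^{n-i} equals (∫_p^1 t^k (1-t)^{n-k-1} dt) / (∫_0^1 t^k (1-t)^{n-k-1} dt), i.e., the probability that a Beta(k+1, n-k) random variable exceeds p. -/
/-!
The binomial tail is `B(p) = ∑_{ν ≤ k} b_{n,ν}(p)` for the Bernstein polynomials `b_{n,ν}`.
Since `b_{n,ν}' = n (b_{n-1,ν-1} - b_{n-1,ν})`, the derivative of `B` telescopes to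
`-n b_{n-1,k}`, a multiple of the Beta density; and `B(1) = 0` because `k < n`.
Integrating from `p` to `1` expresses `B(p)` as a multiple of the Beta tail, and `B(0) = 1`
fixes the normalising constant.
-/

open Polynomial

namespace bernsteinPolynomial

variable {R : Type*} [CommRing R]

theorem eval_eq (n ν : ℕ) (x : R) :
    (bernsteinPolynomial R n ν).eval x = n.choose ν * x ^ ν * (1 - x) ^ (n - ν) := by
  simp [bernsteinPolynomial]

variable (R)

theorem derivative_sum_range (n k : ℕ) :
    derivative (∑ ν ∈ Finset.range (k + 1), bernsteinPolynomial R n ν) =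
      -n * bernsteinPolynomial R (n - 1) k := by
  induction k with
  | zero => simp [derivative_zero]
  | succ k ih =>
    rw [Finset.sum_range_succ, derivative_add, ih, derivative_succ]
    ring

theorem eval_sum_range_at_0 (n k : ℕ) :
    (∑ ν ∈ Finset.range (k + 1), bernsteinPolynomial R n ν).eval 0 = 1 := by
  simp [eval_finsetSum, eval_at_0]

theorem eval_sum_range_at_1 {n k : ℕ} (h : k < n) :
    (∑ ν ∈ Finset.range (k + 1), bernsteinPolynomial R n ν).eval 1 = 0 := by
  rw [eval_finsetSum]
  refine Finset.sum_eq_zero fun ν hν => ?_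
  rw [eval_at_1, if_neg]
  have := Finset.mem_range.mp hν
  omega

end bernsteinPolynomial

theorem Polynomial.integral_eval_derivative (P : ℝ[X]) (a b : ℝ) :
    ∫ t in a..b, (derivative P).eval t = P.eval b - P.eval a :=
  intervalIntegral.integral_eq_sub_of_hasDerivAt (fun t _ => P.hasDerivAt t)
    (P.derivative.continuous.intervalIntegrable a b)

theorem bernsteinPolynomial.eval_sum_range_eq_integral {n k : ℕ} (h : k < n) (p : ℝ) :
    (∑ ν ∈ Finset.range (k + 1), bernsteinPolynomial ℝ n ν).eval p =
      n * ∫ t in p..1, (bernsteinPolynomial ℝ (n - 1) k).eval t := by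
  have := (∑ ν ∈ Finset.range (k + 1), bernsteinPolynomial ℝ n ν).integral_eval_derivative p 1
  simp only [derivative_sum_range, eval_sum_range_at_1 ℝ h, eval_mul, eval_neg, eval_natCast,
    intervalIntegral.integral_const_mul, neg_mul, intervalIntegral.integral_neg] at this
  linarith

theorem binomial_tail_eq_beta_tail_general (n k : ℕ) (hk : k < n) (p : ℝ) :
    ∑ i ∈ Finset.range (k + 1), (n.choose i : ℝ) * p ^ i * (1 - p) ^ (n - i)
      = (∫ t in p..1, t ^ k * (1 - t) ^ (n - k - 1)) /
        (∫ t in (0:ℝ)..1, t ^ k * (1 - t) ^ (n - k - 1)) := by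
  set S := ∑ ν ∈ Finset.range (k + 1), bernsteinPolynomial ℝ n ν
  have hS : ∀ q : ℝ, S.eval q =
      (n * (n - 1).choose k) * ∫ t in q..1, t ^ k * (1 - t) ^ (n - k - 1) := by
    intro q
    simp only [S, bernsteinPolynomial.eval_sum_range_eq_integral hk, bernsteinPolynomial.eval_eq,
      Nat.sub_right_comm n 1 k, mul_assoc, intervalIntegral.integral_const_mul]
  have hc : (n * (n - 1).choose k : ℝ) ≠ 0 := by
    have := Nat.choose_pos (Nat.le_sub_one_of_lt hk)
    have : 0 < n := by omega
    positivity
  calc ∑ i ∈ Finset.range (k + 1), (n.choose i : ℝ) * p ^ i * (1 - p) ^ (n - i)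
      = S.eval p / S.eval 0 := by
        rw [bernsteinPolynomial.eval_sum_range_at_0, div_one]
        simp only [S, eval_finsetSum, bernsteinPolynomial.eval_eq]
    _ = _ := by rw [hS, hS, mul_div_mul_left _ _ hc]

theorem binomial_tail_eq_beta_tail (n k : ℕ) (hk : k < n) (p : ℝ)
    (hp : p ∈ Set.Icc (0:ℝ) 1) :
    ∑ i ∈ Finset.range (k + 1), (n.choose i : ℝ) * p ^ i * (1 - p) ^ (n - i)
      = (∫ t in p..1, t ^ k * (1 - t) ^ (n - k - 1)) /
        (∫ t in (0:ℝ)..1, t ^ k * (1 - t) ^ (n - k - 1)) :=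
  binomial_tail_eq_beta_tail_general n k hk p
end

section
/- Fix ρ ∈ (0,1), a positive integer n, and v ∈ (0,1). Define F_ρ(p,y) = Φ((Φ^{-1}(p) + √ρ · y)/√(1-ρ)) where Φ is the standard normal CDF. Then the equation v = ∫_{-∞}^{∞} φ(y) (1 - F_ρ(p,y))^n dy (with φ the standard normal density) has exactly one solution p = p(v) ∈ (0,1), and this solution satisfies p(v) ≥ 1 - v^{1/n}. -/
open MeasureTheory Real

noncomputable def stdNormalPdf (y : ℝ) : ℝ := Real.exp (-y ^ 2 / 2) / Real.sqrt (2 * Real.pi)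

noncomputable def stdNormalCdf (x : ℝ) : ℝ := ∫ y in Set.Iic x, stdNormalPdf y

noncomputable def stdNormalInv : ℝ → ℝ := Function.invFun stdNormalCdf

noncomputable def vasicekF (ρ p y : ℝ) : ℝ :=
  stdNormalCdf ((stdNormalInv p + Real.sqrt ρ * y) / Real.sqrt (1 - ρ))

/-! With `c = Φ⁻¹ p`, the right-hand side is `g c = E[(1 - Φ((c + √ρ Y) / √(1 - ρ)))ⁿ]` for
`Y ~ N(0, 1)` (`g = noDefaultProb ρ n`). By dominated convergence `g` is continuous and tends to `1`
at `-∞` and to `0` at `+∞`, and it is strictly decreasing, so `g c = v` has exactly one root; `Φ` carries it to the unique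
`p ∈ (0, 1)`. For the bound, splitting `N(0, 1) = N(0, ρ) ∗ N(0, 1 - ρ)` shows that the conditional
default probability averages to `E[Φ((c + √ρ Y) / √(1 - ρ))] = Φ c = p`, and Jensen's inequality for
`t ↦ tⁿ` gives `(1 - p)ⁿ ≤ v`. -/

open Set Filter Topology ProbabilityTheory
open scoped NNReal

lemma stdNormalPdf_eq_gaussianPDFReal : stdNormalPdf = gaussianPDFReal 0 1 := by
  ext y
  simp [stdNormalPdf, gaussianPDFReal, div_eq_inv_mul]

lemma integral_stdNormalPdf_mul (f : ℝ → ℝ) :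
    ∫ y, stdNormalPdf y * f y = ∫ y, f y ∂gaussianReal 0 1 := by
  simp [integral_gaussianReal_eq_integral_smul, stdNormalPdf_eq_gaussianPDFReal]

lemma stdNormalCdf_eq_cdf : stdNormalCdf = cdf (gaussianReal 0 1) := by
  ext x
  rw [cdf_eq_real, measureReal_def, gaussianReal_apply_eq_integral _ one_ne_zero,
    ENNReal.toReal_ofReal (setIntegral_nonneg measurableSet_Iic fun y _ =>
      gaussianPDFReal_nonneg _ _ _),
    stdNormalCdf, stdNormalPdf_eq_gaussianPDFReal]

lemma integrable_stdNormalPdf : Integrable stdNormalPdf := by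
  rw [stdNormalPdf_eq_gaussianPDFReal]
  exact integrable_gaussianPDFReal 0 1

lemma continuous_stdNormalPdf : Continuous stdNormalPdf := by
  unfold stdNormalPdf
  fun_prop

lemma stdNormalCdf_sub_stdNormalCdf (a b : ℝ) :
    stdNormalCdf b - stdNormalCdf a = ∫ y in a..b, stdNormalPdf y :=
  intervalIntegral.integral_Iic_sub_Iic integrable_stdNormalPdf.integrableOn
    integrable_stdNormalPdf.integrableOn

lemma hasDerivAt_stdNormalCdf (x : ℝ) : HasDerivAt stdNormalCdf (stdNormalPdf x) x := by
  have h : stdNormalCdf = fun u => stdNormalCdf 0 + ∫ y in (0 : ℝ)..u, stdNormalPdf y := by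
    ext u
    rw [← stdNormalCdf_sub_stdNormalCdf]
    ring
  rw [h]
  exact (continuous_stdNormalPdf.integral_hasStrictDerivAt 0 x).hasDerivAt.const_add _

lemma continuous_stdNormalCdf : Continuous stdNormalCdf :=
  continuous_iff_continuousAt.2 fun x => (hasDerivAt_stdNormalCdf x).continuousAt

lemma stdNormalCdf_strictMono : StrictMono stdNormalCdf := fun a b hab => by
  have := intervalIntegral.intervalIntegral_pos_of_pos integrable_stdNormalPdf.intervalIntegrable
    (fun y => by unfold stdNormalPdf; positivity) hab
  linarith [stdNormalCdf_sub_stdNormalCdf a b]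

lemma stdNormalCdf_mem_Ioo (x : ℝ) : stdNormalCdf x ∈ Ioo 0 1 := by
  have h := stdNormalCdf_strictMono
  rw [stdNormalCdf_eq_cdf] at h ⊢
  exact ⟨(cdf_nonneg _ (x - 1)).trans_lt (h (by linarith)),
    (h (lt_add_one x)).trans_le (cdf_le_one _ _)⟩

lemma tendsto_stdNormalCdf_atBot : Tendsto stdNormalCdf atBot (𝓝 0) :=
  stdNormalCdf_eq_cdf ▸ tendsto_cdf_atBot _

lemma tendsto_stdNormalCdf_atTop : Tendsto stdNormalCdf atTop (𝓝 1) :=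
  stdNormalCdf_eq_cdf ▸ tendsto_cdf_atTop _

lemma stdNormalCdf_surjOn : SurjOn stdNormalCdf univ (Ioo 0 1) := by
  intro p hp
  obtain ⟨a, ha⟩ := (tendsto_stdNormalCdf_atBot.eventually_lt_const hp.1).exists
  obtain ⟨b, hb⟩ := (tendsto_stdNormalCdf_atTop.eventually_const_lt hp.2).exists
  obtain ⟨x, hx⟩ := intermediate_value_univ a b continuous_stdNormalCdf ⟨ha.le, hb.le⟩
  exact ⟨x, trivial, hx⟩

lemma stdNormalCdf_stdNormalInv {p : ℝ} (hp : p ∈ Ioo 0 1) :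
    stdNormalCdf (stdNormalInv p) = p :=
  Function.invFun_eq (by simpa using stdNormalCdf_surjOn hp)

lemma stdNormalInv_stdNormalCdf (x : ℝ) : stdNormalInv (stdNormalCdf x) = x :=
  Function.leftInverse_invFun stdNormalCdf_strictMono.injective x

lemma gaussianReal_real_Iic {v : ℝ≥0} (hv : v ≠ 0) (t : ℝ) :
    (gaussianReal 0 v).real (Iic t) = stdNormalCdf (t / √v) := by
  have hσ : 0 < √(v : ℝ) := Real.sqrt_pos.2 (by positivity)
  have hmap : gaussianReal 0 v = (gaussianReal 0 1).map (√(v : ℝ) * ·) := by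
    rw [gaussianReal_map_const_mul, mul_zero, mul_one]
    congr
    ext
    simp [Real.sq_sqrt v.coe_nonneg]
  have hpre : (√(v : ℝ) * ·) ⁻¹' Iic t = Iic (t / √v) := by
    ext y
    simp [le_div_iff₀ hσ, mul_comm]
  rw [hmap, measureReal_def, Measure.map_apply (measurable_const_mul _) measurableSet_Iic, hpre,
    ← measureReal_def, stdNormalCdf_eq_cdf, cdf_eq_real]

/-- The default probability of an obligor with threshold `c = Φ⁻¹ p` given the common factor `y`:
`vasicekF ρ p y = condDefaultProb ρ (Φ⁻¹ p) y`. -/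
noncomputable def condDefaultProb (ρ c y : ℝ) : ℝ :=
  stdNormalCdf ((c + √ρ * y) / √(1 - ρ))

noncomputable def noDefaultProb (ρ : ℝ) (n : ℕ) (c : ℝ) : ℝ :=
  ∫ y, (1 - condDefaultProb ρ c y) ^ n ∂gaussianReal 0 1

section Vasicek

variable {ρ : ℝ} {n : ℕ}

lemma continuous_condDefaultProb (ρ : ℝ) : Continuous fun q : ℝ × ℝ => condDefaultProb ρ q.1 q.2 :=
  continuous_stdNormalCdf.comp (by fun_prop)

lemma condDefaultProb_mem_Ioo (ρ c y : ℝ) : condDefaultProb ρ c y ∈ Ioo 0 1 :=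
  stdNormalCdf_mem_Ioo _

lemma condDefaultProb_strictMono (hρ : ρ < 1) (y : ℝ) :
    StrictMono fun c => condDefaultProb ρ c y := fun c c' hcc' =>
  stdNormalCdf_strictMono (div_lt_div_of_pos_right (by linarith) (Real.sqrt_pos.2 (by linarith)))

lemma tendsto_condDefaultProb_atBot (hρ : ρ < 1) (y : ℝ) :
    Tendsto (fun c => condDefaultProb ρ c y) atBot (𝓝 0) :=
  tendsto_stdNormalCdf_atBot.comp <| (tendsto_atBot_add_const_right _ _ tendsto_id).atBot_div_const
    (Real.sqrt_pos.2 (by linarith))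

lemma tendsto_condDefaultProb_atTop (hρ : ρ < 1) (y : ℝ) :
    Tendsto (fun c => condDefaultProb ρ c y) atTop (𝓝 1) :=
  tendsto_stdNormalCdf_atTop.comp <| (tendsto_atTop_add_const_right _ _ tendsto_id).atTop_div_const
    (Real.sqrt_pos.2 (by linarith))

/-- Averaging the conditional default probability over the common factor recovers `Φ c`: this is
`N(0, 1) = N(0, ρ) ∗ N(0, 1 - ρ)` evaluated on `Iic c`. -/
lemma integral_condDefaultProb (h0 : 0 ≤ ρ) (h1 : ρ < 1) (c : ℝ) :
    ∫ y, condDefaultProb ρ c y ∂gaussianReal 0 1 = stdNormalCdf c := by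
  have hσ : (1 - ρ).toNNReal ≠ 0 := by simpa using h1
  have hconv : gaussianReal 0 ρ.toNNReal ∗ gaussianReal 0 (1 - ρ).toNNReal = gaussianReal 0 1 := by
    rw [gaussianReal_conv_gaussianReal, ← Real.toNNReal_add h0 (by linarith)]
    simp
  have hfactor : gaussianReal 0 ρ.toNNReal = (gaussianReal 0 1).map (-√ρ * ·) := by
    rw [gaussianReal_map_const_mul, mul_zero, mul_one]
    congr
    ext
    simp [Real.sq_sqrt h0, h0]
  calc ∫ y, condDefaultProb ρ c y ∂gaussianReal 0 1
      = ∫ x, stdNormalCdf ((c - x) / √(1 - ρ)) ∂gaussianReal 0 ρ.toNNReal := by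
        rw [hfactor, integral_map (measurable_const_mul _).aemeasurable
          (f := fun x => stdNormalCdf ((c - x) / √(1 - ρ)))
          (continuous_stdNormalCdf.comp (by fun_prop)).aestronglyMeasurable]
        simp only [condDefaultProb, neg_mul, sub_neg_eq_add]
    _ = ∫ x, (gaussianReal 0 (1 - ρ).toNNReal).real (Iic (c - x)) ∂gaussianReal 0 ρ.toNNReal := by
        simp_rw [gaussianReal_real_Iic hσ, Real.coe_toNNReal _ (sub_nonneg.2 h1.le)]
    _ = ∫ x, ∫ y, (Iic c).indicator 1 (x + y) ∂gaussianReal 0 (1 - ρ).toNNReal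
          ∂gaussianReal 0 ρ.toNNReal := by
        congr with x
        rw [← integral_indicator_one measurableSet_Iic]
        congr with y
        simp [indicator, le_sub_iff_add_le']
    _ = (gaussianReal 0 1).real (Iic c) := by
        rw [← hconv, ← integral_indicator_one measurableSet_Iic, integral_conv]
        exact (integrable_const (1 : ℝ)).indicator measurableSet_Iic
    _ = stdNormalCdf c := by rw [stdNormalCdf_eq_cdf, cdf_eq_real]

lemma one_sub_condDefaultProb_pow_mem_Icc (ρ : ℝ) (n : ℕ) (c y : ℝ) :
    (1 - condDefaultProb ρ c y) ^ n ∈ Icc 0 1 := by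
  obtain ⟨h0, h1⟩ := condDefaultProb_mem_Ioo ρ c y
  exact ⟨pow_nonneg (by linarith) n, pow_le_one₀ (by linarith) (by linarith)⟩

lemma norm_one_sub_condDefaultProb_pow_le (ρ : ℝ) (n : ℕ) (c y : ℝ) :
    ‖(1 - condDefaultProb ρ c y) ^ n‖ ≤ 1 := by
  obtain ⟨h0, h1⟩ := one_sub_condDefaultProb_pow_mem_Icc ρ n c y
  rwa [Real.norm_of_nonneg h0]

lemma aestronglyMeasurable_one_sub_condDefaultProb_pow (ρ : ℝ) (n : ℕ) (c : ℝ) :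
    AEStronglyMeasurable (fun y => (1 - condDefaultProb ρ c y) ^ n) (gaussianReal 0 1) :=
  ((continuous_const.sub ((continuous_condDefaultProb ρ).comp
    (Continuous.prodMk_right c))).pow n).aestronglyMeasurable

lemma integrable_one_sub_condDefaultProb_pow (ρ : ℝ) (n : ℕ) (c : ℝ) :
    Integrable (fun y => (1 - condDefaultProb ρ c y) ^ n) (gaussianReal 0 1) :=
  .of_bound (aestronglyMeasurable_one_sub_condDefaultProb_pow ρ n c) 1
    (ae_of_all _ (norm_one_sub_condDefaultProb_pow_le ρ n c))

lemma continuous_noDefaultProb : Continuous (noDefaultProb ρ n) :=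
  continuous_of_dominated (aestronglyMeasurable_one_sub_condDefaultProb_pow ρ n)
    (fun c => ae_of_all _ (norm_one_sub_condDefaultProb_pow_le ρ n c)) (integrable_const 1)
    (ae_of_all _ fun y => (continuous_const.sub ((continuous_condDefaultProb ρ).comp
      (Continuous.prodMk_left y))).pow n)

lemma noDefaultProb_strictAnti (hρ : ρ < 1) (hn : n ≠ 0) : StrictAnti (noDefaultProb ρ n) := by
  intro c c' hcc'
  have hlt : ∀ y, (1 - condDefaultProb ρ c' y) ^ n < (1 - condDefaultProb ρ c y) ^ n := fun y =>
    pow_lt_pow_left₀ (by linarith [condDefaultProb_strictMono hρ y hcc'])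
      (by linarith [(condDefaultProb_mem_Ioo ρ c' y).2]) hn
  have hint := integrable_one_sub_condDefaultProb_pow ρ n
  have hpos := (integral_pos_iff_support_of_nonneg (fun y => (sub_pos.2 (hlt y)).le)
    ((hint c).sub (hint c'))).2 (by simp [Function.support, fun y => (sub_pos.2 (hlt y)).ne'])
  rw [integral_sub (hint c) (hint c')] at hpos
  exact sub_pos.1 hpos

lemma tendsto_noDefaultProb {l : Filter ℝ} [l.IsCountablyGenerated] {L : ℝ}
    (h : ∀ y, Tendsto (fun c => (1 - condDefaultProb ρ c y) ^ n) l (𝓝 L)) :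
    Tendsto (noDefaultProb ρ n) l (𝓝 L) := by
  have := tendsto_integral_filter_of_dominated_convergence (μ := gaussianReal 0 1) (fun _ => 1)
    (Eventually.of_forall (aestronglyMeasurable_one_sub_condDefaultProb_pow ρ n))
    (Eventually.of_forall fun c => ae_of_all _ (norm_one_sub_condDefaultProb_pow_le ρ n c))
    (integrable_const 1) (ae_of_all _ h)
  unfold noDefaultProb
  simpa using this

lemma tendsto_noDefaultProb_atBot (hρ : ρ < 1) : Tendsto (noDefaultProb ρ n) atBot (𝓝 1) :=
  tendsto_noDefaultProb fun y => by
    simpa using ((tendsto_condDefaultProb_atBot hρ y).const_sub 1).pow n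

lemma tendsto_noDefaultProb_atTop (hρ : ρ < 1) (hn : n ≠ 0) :
    Tendsto (noDefaultProb ρ n) atTop (𝓝 0) :=
  tendsto_noDefaultProb fun y => by
    simpa [hn] using ((tendsto_condDefaultProb_atTop hρ y).const_sub 1).pow n

lemma existsUnique_noDefaultProb_eq {v : ℝ} (hρ : ρ < 1) (hn : n ≠ 0) (hv : v ∈ Ioo 0 1) :
    ∃! c, noDefaultProb ρ n c = v := by
  obtain ⟨a, ha⟩ := ((tendsto_noDefaultProb_atTop hρ hn).eventually_lt_const hv.1).exists
  obtain ⟨b, hb⟩ := ((tendsto_noDefaultProb_atBot hρ).eventually_const_lt hv.2).exists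
  obtain ⟨c, hc⟩ := intermediate_value_univ a b continuous_noDefaultProb ⟨ha.le, hb.le⟩
  exact ⟨c, hc, fun c' hc' => (noDefaultProb_strictAnti hρ hn).injective (hc'.trans hc.symm)⟩

lemma one_sub_stdNormalCdf_pow_le_noDefaultProb (h0 : 0 ≤ ρ) (h1 : ρ < 1) (c : ℝ) :
    (1 - stdNormalCdf c) ^ n ≤ noDefaultProb ρ n c := by
  have hfi : Integrable (fun y => 1 - condDefaultProb ρ c y) (gaussianReal 0 1) := by
    simpa using integrable_one_sub_condDefaultProb_pow ρ 1 c
  have hmean : ∫ y, (1 - condDefaultProb ρ c y) ∂gaussianReal 0 1 = 1 - stdNormalCdf c := by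
    rw [integral_sub (integrable_const 1) (((integrable_const 1).sub hfi).congr
      (ae_of_all _ fun y => sub_sub_cancel 1 _)), integral_condDefaultProb h0 h1]
    simp
  have hmem : ∀ y, 1 - condDefaultProb ρ c y ∈ Ici 0 := fun y =>
    (one_sub_condDefaultProb_pow_mem_Icc ρ 1 c y).1.trans_eq (pow_one _)
  rw [← hmean]
  exact (convexOn_pow n).map_integral_le (continuous_pow n).continuousOn isClosed_Ici
    (ae_of_all _ hmem) hfi (integrable_one_sub_condDefaultProb_pow ρ n c)

end Vasicek

lemma integral_stdNormalPdf_mul_one_sub_vasicekF_pow (ρ : ℝ) (n : ℕ) (p : ℝ) :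
    ∫ y, stdNormalPdf y * (1 - vasicekF ρ p y) ^ n = noDefaultProb ρ n (stdNormalInv p) :=
  integral_stdNormalPdf_mul _

theorem vasicek_zero_default_unique_solution (ρ : ℝ) (hρ : ρ ∈ Set.Ioo (0:ℝ) 1)
    (n : ℕ) (hn : 1 ≤ n) (v : ℝ) (hv : v ∈ Set.Ioo (0:ℝ) 1) :
    (∃! p : ℝ, p ∈ Set.Ioo (0:ℝ) 1 ∧
        v = ∫ y : ℝ, stdNormalPdf y * (1 - vasicekF ρ p y) ^ n)
    ∧ ∀ p ∈ Set.Ioo (0:ℝ) 1,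
        v = (∫ y : ℝ, stdNormalPdf y * (1 - vasicekF ρ p y) ^ n) →
        1 - v ^ ((1:ℝ)/n) ≤ p := by
  have hn0 : n ≠ 0 := by omega
  simp only [integral_stdNormalPdf_mul_one_sub_vasicekF_pow]
  refine ⟨?_, fun p hp hvp => ?_⟩
  · obtain ⟨c, hc, huniq⟩ := existsUnique_noDefaultProb_eq hρ.2 hn0 hv
    refine ⟨stdNormalCdf c, ⟨stdNormalCdf_mem_Ioo c, by rw [stdNormalInv_stdNormalCdf, hc]⟩, ?_⟩
    rintro p ⟨hp, hvp⟩
    rw [← stdNormalCdf_stdNormalInv hp, huniq _ hvp.symm]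
  · have hpow := one_sub_stdNormalCdf_pow_le_noDefaultProb (n := n) hρ.1.le hρ.2 (stdNormalInv p)
    rw [stdNormalCdf_stdNormalInv hp, ← hvp, ← Real.rpow_natCast] at hpow
    have := (Real.le_rpow_inv_iff_of_pos (by linarith [hp.2]) hv.1.le (by positivity)).2 hpow
    rw [one_div]
    linarith
end

section
/- Let p_A ≤ p_B ≤ p_C be default probabilities of three rating grades. Then p_A ≤ max over the constraint set of p_A equals the value obtained at p_A = p_B = p_C; formally: sup { q_A : (q_A,q_B,q_C) with q_A ≤ q_B ≤ q_C, all in [0,1], satisfying (1-q_A)^{n_A}(1-q_B)^{n_B}(1-q_C)^{n_C} ≥ 1-γ } = 1 - (1-γ)^{1/(n_A+n_B+n_C)} for positive integers n_A, n_B, n_C and γ ∈ (0,1). -/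
/-!
Under the constraint `qA ≤ qB ≤ qC` the factors satisfy `1 - qC ≤ 1 - qB ≤ 1 - qA`, so the
no-default probability is at most `(1 - qA) ^ (nA + nB + nC)`, with equality when all three PDs
coincide. Hence `qA` is admissible exactly when `(1 - qA) ^ (nA + nB + nC) ≥ 1 - γ`, i.e. when
`qA ≤ 1 - (1 - γ) ^ (1 / (nA + nB + nC))`.
-/

theorem pow_mul_pow_mul_pow_le_pow_add {x y z : ℝ} (nx ny nz : ℕ) (hz : 0 ≤ z) (hzy : z ≤ y)
    (hyx : y ≤ x) : x ^ nx * y ^ ny * z ^ nz ≤ x ^ (nx + ny + nz) := by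
  have hy : 0 ≤ y := hz.trans hzy
  have hx : 0 ≤ x := hy.trans hyx
  rw [pow_add, pow_add]
  gcongr
  exact hzy.trans hyx

theorem le_one_sub_pow_iff {c q : ℝ} {n : ℕ} (hc : 0 < c) (hn : n ≠ 0) (hq : q ≤ 1) :
    c ≤ (1 - q) ^ n ↔ q ≤ 1 - c ^ ((1 : ℝ) / n) := by
  rw [one_div, ← Real.rpow_natCast,
    ← Real.rpow_inv_le_iff_of_pos hc.le (by linarith) (by positivity), le_sub_comm]

theorem setOf_monotone_pd_eq_Icc {c : ℝ} (hc : 0 < c) {nA : ℕ} (nB nC : ℕ) (hA : 0 < nA) :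
    {qA : ℝ | ∃ qB qC : ℝ, 0 ≤ qA ∧ qA ≤ qB ∧ qB ≤ qC ∧ qC ≤ 1 ∧
        (1 - qA) ^ nA * (1 - qB) ^ nB * (1 - qC) ^ nC ≥ c}
      = Set.Icc 0 (1 - c ^ ((1 : ℝ) / (nA + nB + nC : ℕ))) := by
  have hN : nA + nB + nC ≠ 0 := by omega
  ext q
  constructor
  · rintro ⟨qB, qC, hq0, hqB, hBC, hC1, hprod⟩
    have hbound := pow_mul_pow_mul_pow_le_pow_add nA nB nC (sub_nonneg.2 hC1)
      (sub_le_sub_left hBC 1) (sub_le_sub_left hqB 1)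
    exact ⟨hq0, (le_one_sub_pow_iff hc hN (by linarith)).1 (hprod.le.trans hbound)⟩
  · rintro ⟨hq0, hq⟩
    have hq1 : q ≤ 1 := hq.trans (sub_le_self _ (by positivity))
    refine ⟨q, q, hq0, le_rfl, le_rfl, hq1, ?_⟩
    rw [← pow_add, ← pow_add]
    exact (le_one_sub_pow_iff hc hN hq1).2 hq

theorem most_prudent_estimate_sup_general (nA nB nC : ℕ) (hA : 0 < nA)
    (γ : ℝ) (hγ : γ ∈ Set.Ioo (0:ℝ) 1) :
    sSup {qA : ℝ | ∃ qB qC : ℝ, 0 ≤ qA ∧ qA ≤ qB ∧ qB ≤ qC ∧ qC ≤ 1 ∧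
        (1 - qA) ^ nA * (1 - qB) ^ nB * (1 - qC) ^ nC ≥ 1 - γ}
      = 1 - (1 - γ) ^ ((1:ℝ) / (nA + nB + nC)) := by
  obtain ⟨hγ0, hγ1⟩ := hγ
  have hroot_le_one : (1 - γ) ^ ((1 : ℝ) / (nA + nB + nC : ℕ)) ≤ 1 :=
    Real.rpow_le_one (by linarith) (by linarith) (by positivity)
  rw [setOf_monotone_pd_eq_Icc (by linarith) nB nC hA, csSup_Icc (by linarith),
    Nat.cast_add, Nat.cast_add]

theorem most_prudent_estimate_sup (nA nB nC : ℕ) (hA : 0 < nA) (hB : 0 < nB) (hC : 0 < nC)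
    (γ : ℝ) (hγ : γ ∈ Set.Ioo (0:ℝ) 1) :
    sSup {qA : ℝ | ∃ qB qC : ℝ, 0 ≤ qA ∧ qA ≤ qB ∧ qB ≤ qC ∧ qC ≤ 1 ∧
        (1 - qA) ^ nA * (1 - qB) ^ nB * (1 - qC) ^ nC ≥ 1 - γ}
      = 1 - (1 - γ) ^ ((1:ℝ) / (nA + nB + nC)) :=
  most_prudent_estimate_sup_general nA nB nC hA γ hγ
end
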